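/- For θ ∈ (−1,1), let f_θ(z₁,z₂) = (1/(2π·√(1−θ²)))·exp( −(z₁² − 2θ·z₁·z₂ + z₂²) / (2·(1−θ²)) ) be the standard bivariate normal density with correlation θ. Then ∫_ℝ ∫_ℝ |z₁|·|z₂|·f_θ(z₁,z₂) dz₁ dz₂ = (2/π)·( θ·arcsin(θ) + √(1 − θ²) ). -/

import Mathlib

open MeasureTheory

/-- The standard bivariate normal density with correlation `θ`. -/
noncomputable def bvnDensity (θ z₁ z₂ : ℝ) : ℝ :=
  (1 / (2 * Real.pi * Real.sqrt (1 - θ ^ 2))) *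
    Real.exp (-(z₁ ^ 2 - 2 * θ * z₁ * z₂ + z₂ ^ 2) / (2 * (1 - θ ^ 2)))

open Real Set


lemma abs_cos_int {θ : ℝ} (h1 : -1 < θ) (h2 : θ < 1) :
    ∫ u in (-π)..π, |θ + Real.cos u| =
      4 * (θ * Real.arcsin θ + Real.sqrt (1 - θ ^ 2)) := by
  set β := Real.arccos (-θ) with hβ
  have hβ1 : 0 ≤ β := Real.arccos_nonneg _
  have hβ2 : β ≤ π := Real.arccos_le_pi _
  have hcosβ : Real.cos β = -θ := Real.cos_arccos (by linarith) (by linarith)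
  have hsinβ : Real.sin β = Real.sqrt (1 - θ ^ 2) := by
    rw [hβ, Real.sin_arccos]; ring_nf
  have hβeq : β = π / 2 + Real.arcsin θ := by
    rw [hβ, Real.arccos_neg, Real.arccos_eq_pi_div_two_sub_arcsin]; ring
  have hint : ∀ a b : ℝ, IntervalIntegrable (fun u => |θ + Real.cos u|) volume a b :=
    fun a b => ((continuous_const.add Real.continuous_cos).abs).intervalIntegrable a b
  have key : ∀ a b : ℝ, ∫ u in a..b, (θ + Real.cos u) =
      θ * (b - a) + (Real.sin b - Real.sin a) := by
    intro a b
    rw [intervalIntegral.integral_add (intervalIntegrable_const)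
      (Real.continuous_cos.intervalIntegrable a b), intervalIntegral.integral_const,
      integral_cos]
    simp [smul_eq_mul]; ring
  have hsplit : (∫ u in (-π)..(-β), |θ + Real.cos u|) + (∫ u in (-β)..β, |θ + Real.cos u|)
      + (∫ u in β..π, |θ + Real.cos u|) = ∫ u in (-π)..π, |θ + Real.cos u| := by
    rw [intervalIntegral.integral_add_adjacent_intervals (hint _ _) (hint _ _),
      intervalIntegral.integral_add_adjacent_intervals (hint _ _) (hint _ _)]
  rw [← hsplit]
  have e₂ : (∫ u in (-β)..β, |θ + Real.cos u|) = ∫ u in (-β)..β, (θ + Real.cos u) := by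
    apply intervalIntegral.integral_congr
    intro u hu
    rw [Set.uIcc_of_le (by linarith : -β ≤ β)] at hu
    have h1u : |u| ≤ β := abs_le.2 ⟨hu.1, hu.2⟩
    have hc : Real.cos β ≤ Real.cos u := by
      rw [← Real.cos_abs u]
      exact Real.cos_le_cos_of_nonneg_of_le_pi (abs_nonneg u) hβ2 h1u
    rw [hcosβ] at hc
    exact abs_of_nonneg (by linarith)
  have e₃ : (∫ u in β..π, |θ + Real.cos u|) = ∫ u in β..π, -(θ + Real.cos u) := by
    apply intervalIntegral.integral_congr
    intro u hu
    rw [Set.uIcc_of_le hβ2] at hu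
    have hc : Real.cos u ≤ Real.cos β :=
      Real.cos_le_cos_of_nonneg_of_le_pi hβ1 hu.2 hu.1
    rw [hcosβ] at hc
    exact abs_of_nonpos (by linarith)
  have e₁ : (∫ u in (-π)..(-β), |θ + Real.cos u|) = ∫ u in (-π)..(-β), -(θ + Real.cos u) := by
    apply intervalIntegral.integral_congr
    intro u hu
    rw [Set.uIcc_of_le (by linarith : -π ≤ -β)] at hu
    have hc : Real.cos u ≤ Real.cos β := by
      rw [← Real.cos_neg u]
      exact Real.cos_le_cos_of_nonneg_of_le_pi hβ1 (by linarith [hu.1]) (by linarith [hu.2])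
    rw [hcosβ] at hc
    exact abs_of_nonpos (by linarith)
  rw [e₁, e₂, e₃, intervalIntegral.integral_neg, intervalIntegral.integral_neg, key, key, key]
  rw [hβeq] at hsinβ ⊢
  simp only [Real.sin_pi, Real.sin_neg]
  have hneg : Real.sin (-(π / 2 + Real.arcsin θ)) = -Real.sin (π / 2 + Real.arcsin θ) :=
    Real.sin_neg _
  rw [hsinβ] at hneg ⊢
  ring

lemma angular_int {θ : ℝ} (h1 : -1 < θ) (h2 : θ < 1) :
    ∫ φ in Set.Ioo (-π) π, |Real.cos φ * (θ * Real.cos φ + Real.sqrt (1 - θ ^ 2) * Real.sin φ)| =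
      2 * (θ * Real.arcsin θ + Real.sqrt (1 - θ ^ 2)) := by
  set s := Real.sqrt (1 - θ ^ 2) with hs
  set α := Real.arccos θ with hα
  have hcosα : Real.cos α = θ := Real.cos_arccos (by linarith) (by linarith)
  have hsinα : Real.sin α = s := Real.sin_arccos θ
  have hpt : ∀ φ : ℝ, Real.cos φ * (θ * Real.cos φ + s * Real.sin φ)
      = (1/2) * (θ + Real.cos (2 * φ + -α)) := by
    intro φ
    have : Real.cos (2*φ + -α) = Real.cos (2*φ) * Real.cos α + Real.sin (2*φ) * Real.sin α := by
      rw [← Real.cos_sub]; ring_nf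
    rw [this, hcosα, hsinα, Real.cos_two_mul, Real.sin_two_mul]
    ring
  have hper : Function.Periodic (fun u : ℝ => |θ + Real.cos u|) (2 * π) := by
    intro x; simp [Real.cos_add_two_pi]
  have hfint : ∀ a b : ℝ, IntervalIntegrable (fun u => |θ + Real.cos u|) volume a b :=
    fun a b => ((continuous_const.add Real.continuous_cos).abs).intervalIntegrable a b
  have hIoo : (∫ φ in Set.Ioo (-π) π,
      |Real.cos φ * (θ * Real.cos φ + s * Real.sin φ)|)
      = ∫ φ in (-π)..π, |Real.cos φ * (θ * Real.cos φ + s * Real.sin φ)| := by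
    rw [intervalIntegral.integral_of_le (by linarith [Real.pi_pos] : -π ≤ π),
      MeasureTheory.integral_Ioc_eq_integral_Ioo]
  rw [hIoo]
  have hcongr : (∫ φ in (-π)..π, |Real.cos φ * (θ * Real.cos φ + s * Real.sin φ)|)
      = ∫ φ in (-π)..π, (1/2) * |θ + Real.cos (2 * φ + -α)| := by
    apply intervalIntegral.integral_congr
    intro φ _
    show |Real.cos φ * (θ * Real.cos φ + s * Real.sin φ)| = 1/2 * |θ + Real.cos (2*φ + -α)|
    rw [hpt φ, abs_mul]
    norm_num
  rw [hcongr, intervalIntegral.integral_const_mul]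
  have hsub : (∫ φ in (-π)..π, |θ + Real.cos (2 * φ + -α)|)
      = (2:ℝ)⁻¹ • ∫ u in (2*(-π) + -α)..(2*π + -α), |θ + Real.cos u| := by
    exact intervalIntegral.integral_comp_mul_add (fun u => |θ + Real.cos u|) two_ne_zero (-α)
  have e1 : (∫ u in (-2*π - α)..(-α), |θ + Real.cos u|) = ∫ u in (-π)..π, |θ + Real.cos u| := by
    have h := hper.intervalIntegral_add_eq (-2*π - α) (-π)
    rwa [show -2*π - α + 2*π = -α by ring, show -π + 2*π = π by ring] at h
  have e2 : (∫ u in (-α)..(2*π - α), |θ + Real.cos u|) = ∫ u in (-π)..π, |θ + Real.cos u| := by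
    have h := hper.intervalIntegral_add_eq (-α) (-π)
    rwa [show -α + 2*π = 2*π - α by ring, show -π + 2*π = π by ring] at h
  have e3 : (∫ u in (2*(-π) + -α)..(2*π + -α), |θ + Real.cos u|)
      = 2 * ∫ u in (-π)..π, |θ + Real.cos u| := by
    rw [show 2*(-π) + -α = -2*π - α by ring, show 2*π + -α = 2*π - α by ring,
      ← intervalIntegral.integral_add_adjacent_intervals (hfint (-2*π - α) (-α))
        (hfint (-α) (2*π - α)), e1, e2]
    ring
  rw [hsub, e3, abs_cos_int h1 h2, smul_eq_mul]
  ring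

lemma radial_integrable : IntegrableOn (fun r : ℝ => r ^ 3 * Real.exp (-(1/2) * r ^ 2)) (Set.Ioi 0) := by
  have h := integrableOn_rpow_mul_exp_neg_mul_sq (by norm_num : (0:ℝ) < 1/2) (by norm_num : (-1:ℝ) < 3)
  apply h.congr_fun ?_ measurableSet_Ioi
  intro x hx
  show x ^ (3:ℝ) * Real.exp (-(1/2)*x^2) = x ^ (3:ℕ) * Real.exp (-(1/2)*x^2)
  rw [← Real.rpow_natCast x 3]; norm_num

lemma radial_int : ∫ r in Set.Ioi (0:ℝ), r ^ 3 * Real.exp (-(1/2) * r ^ 2) = 2 := by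
  have hd : ∀ r : ℝ, HasDerivAt (fun x => -(x^2+2)*Real.exp (-(1/2)*x^2))
      (r^3 * Real.exp (-(1/2)*r^2)) r := by
    intro r
    have h1 : HasDerivAt (fun x:ℝ => -(x^2+2)) (-(2*r)) r := by
      refine (((hasDerivAt_pow 2 r).add_const 2).neg).congr_deriv ?_
      norm_num
    have h2 : HasDerivAt (fun x:ℝ => Real.exp (-(1/2)*x^2))
        (Real.exp (-(1/2)*r^2) * (-(1/2)*(2*r^1))) r :=
      ((hasDerivAt_pow 2 r).const_mul (-(1/2))).exp
    have h3 := h1.mul h2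
    exact h3.congr_deriv (by ring)
  have htend : Filter.Tendsto (fun x:ℝ => -(x^2+2)*Real.exp (-(1/2)*x^2))
      Filter.atTop (nhds 0) := by
    have t1 : Filter.Tendsto (fun x:ℝ => x ^ (2:ℝ) * Real.exp (-(1/2)*x^2))
        Filter.atTop (nhds 0) := by
      apply (rpow_mul_exp_neg_mul_sq_isLittleO_exp_neg (by norm_num) 2).tendsto_zero_of_tendsto
        (y := (0:ℝ))
      apply Real.tendsto_exp_atBot.comp
      exact (Filter.tendsto_id (α := ℝ)).const_mul_atTop_of_neg (by norm_num)
    have t1' : Filter.Tendsto (fun x:ℝ => x ^ 2 * Real.exp (-(1/2)*x^2))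
        Filter.atTop (nhds 0) := by
      apply t1.congr'
      filter_upwards [Filter.eventually_gt_atTop (0:ℝ)] with x hx
      rw [← Real.rpow_natCast x 2]; norm_num
    have t2 : Filter.Tendsto (fun x:ℝ => Real.exp (-(1/2)*x^2)) Filter.atTop (nhds 0) := by
      apply Real.tendsto_exp_atBot.comp
      exact (Filter.tendsto_pow_atTop (two_ne_zero)).const_mul_atTop_of_neg (by norm_num)
    have := (t1'.add (t2.const_mul 2)).neg
    simp only [neg_zero, add_zero, mul_zero, zero_add] at this
    apply this.congr
    intro x; ring
  have := integral_Ioi_of_hasDerivAt_of_tendsto' (f := fun x => -(x^2+2)*Real.exp (-(1/2)*x^2))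
    (fun x _ => hd x) radial_integrable htend
  rw [this]
  norm_num

lemma inner_eq {θ : ℝ} (h1 : -1 < θ) (h2 : θ < 1) (z₁ : ℝ) :
    (∫ z₂ : ℝ, |z₁| * |z₂| * bvnDensity θ z₁ z₂)
      = ∫ u : ℝ, |z₁| * |θ * z₁ + Real.sqrt (1 - θ^2) * u|
          * ((1/(2*π)) * Real.exp (-(1/2) * (z₁^2 + u^2))) := by
  set s := Real.sqrt (1 - θ ^ 2) with hs
  have hpos : (0:ℝ) < 1 - θ ^ 2 := by nlinarith
  have hspos : 0 < s := Real.sqrt_pos.2 hpos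
  have hs2 : s ^ 2 = 1 - θ ^ 2 := Real.sq_sqrt hpos.le
  set h : ℝ → ℝ := fun z₂ => |z₁| * |z₂| * bvnDensity θ z₁ z₂ with hh
  have hpt : ∀ u : ℝ, |z₁| * |θ * z₁ + s * u| * ((1/(2*π)) * Real.exp (-(1/2) * (z₁^2 + u^2)))
      = s * h (θ * z₁ + s * u) := by
    intro u
    rw [hh]
    simp only [bvnDensity]
    rw [show (-(z₁ ^ 2 - 2 * θ * z₁ * (θ * z₁ + s * u) + (θ * z₁ + s * u) ^ 2)
        / (2 * (1 - θ ^ 2))) = -(1/2) * (z₁^2 + u^2) by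
      field_simp
      linear_combination -u^2 * hs2
      ]
    rw [← hs]
    field_simp
  rw [show (∫ u : ℝ, |z₁| * |θ * z₁ + s * u|
          * ((1/(2*π)) * Real.exp (-(1/2) * (z₁^2 + u^2))))
      = ∫ u : ℝ, s * h (θ * z₁ + s * u) by exact integral_congr_ae (Filter.Eventually.of_forall hpt)]
  rw [MeasureTheory.integral_const_mul s _]
  have e1 : (∫ u : ℝ, h (θ * z₁ + s * u)) = |s⁻¹| • ∫ x : ℝ, h (θ * z₁ + x) :=
    MeasureTheory.Measure.integral_comp_mul_left (fun x => h (θ * z₁ + x)) s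
  rw [e1, MeasureTheory.integral_add_left_eq_self h (θ * z₁), abs_of_pos (inv_pos.2 hspos),
    smul_eq_mul]
  rw [← mul_assoc, mul_inv_cancel₀ hspos.ne', one_mul]

lemma G_integrable {θ : ℝ} (h1 : -1 < θ) (h2 : θ < 1) :
    Integrable (fun p : ℝ × ℝ => |p.1| * |θ * p.1 + Real.sqrt (1 - θ^2) * p.2|
      * ((1/(2*π)) * Real.exp (-(1/2) * (p.1^2 + p.2^2)))) volume := by
  set s := Real.sqrt (1 - θ ^ 2) with hs
  have hθ1 : |θ| ≤ 1 := by rw [abs_le]; constructor <;> linarith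
  have hs1 : s ≤ 1 := by
    have h' : Real.sqrt (1 - θ^2) ≤ Real.sqrt 1 := Real.sqrt_le_sqrt (by nlinarith)
    rwa [Real.sqrt_one] at h'
  have hs0 : 0 ≤ s := Real.sqrt_nonneg _
  have A1 : Integrable (fun x : ℝ => x ^ 2 * Real.exp (-(1/2) * x^2)) := by
    have h := integrable_rpow_mul_exp_neg_mul_sq (by norm_num : (0:ℝ) < 1/2)
      (by norm_num : (-1:ℝ) < 2)
    apply h.congr (Filter.Eventually.of_forall fun x => ?_)
    rw [← Real.rpow_natCast x 2]; norm_num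
  have A2 : Integrable (fun x : ℝ => |x| * Real.exp (-(1/2) * x^2)) := by
    have h := (integrable_mul_exp_neg_mul_sq (by norm_num : (0:ℝ) < 1/2)).abs
    apply h.congr (Filter.Eventually.of_forall fun x => ?_)
    show |x * Real.exp (-(1/2) * x^2)| = |x| * Real.exp (-(1/2) * x^2)
    rw [abs_mul, abs_of_pos (Real.exp_pos _)]
  have A3 : Integrable (fun x : ℝ => Real.exp (-(1/2) * x^2)) :=
    integrable_exp_neg_mul_sq (by norm_num)
  have P1 : Integrable (fun p : ℝ × ℝ => (p.1 ^ 2 * Real.exp (-(1/2) * p.1^2))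
      * Real.exp (-(1/2) * p.2^2)) volume := by
    rw [MeasureTheory.Measure.volume_eq_prod]; exact A1.mul_prod A3
  have P2 : Integrable (fun p : ℝ × ℝ => (|p.1| * Real.exp (-(1/2) * p.1^2))
      * (|p.2| * Real.exp (-(1/2) * p.2^2))) volume := by
    rw [MeasureTheory.Measure.volume_eq_prod]; exact A2.mul_prod A2
  have hbd := (P1.add P2).const_mul (1/(2*π))
  apply hbd.mono'
  · apply Continuous.aestronglyMeasurable
    fun_prop
  · apply Filter.Eventually.of_forall
    intro p
    have hE : Real.exp (-(1/2) * (p.1^2 + p.2^2))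
        = Real.exp (-(1/2) * p.1^2) * Real.exp (-(1/2) * p.2^2) := by
      rw [← Real.exp_add]; ring_nf
    have h0 : |θ * p.1 + s * p.2| ≤ |p.1| + |p.2| := by
      calc |θ * p.1 + s * p.2| ≤ |θ * p.1| + |s * p.2| := abs_add_le _ _
        _ = |θ| * |p.1| + s * |p.2| := by rw [abs_mul, abs_mul, abs_of_nonneg hs0]
        _ ≤ |p.1| + |p.2| := by nlinarith [abs_nonneg p.1, abs_nonneg p.2]
    have hc : (0:ℝ) < 1/(2*π) := by positivity
    rw [Real.norm_eq_abs, abs_of_nonneg (by positivity)]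
    calc |p.1| * |θ * p.1 + s * p.2| * (1/(2*π) * Real.exp (-(1/2) * (p.1^2 + p.2^2)))
        ≤ |p.1| * (|p.1| + |p.2|) * (1/(2*π) * Real.exp (-(1/2) * (p.1^2 + p.2^2))) := by
          apply mul_le_mul_of_nonneg_right
            (mul_le_mul_of_nonneg_left h0 (abs_nonneg _)) (by positivity)
      _ = 1/(2*π) * ((p.1 ^ 2 * Real.exp (-(1/2) * p.1^2)) * Real.exp (-(1/2) * p.2^2)
            + (|p.1| * Real.exp (-(1/2) * p.1^2)) * (|p.2| * Real.exp (-(1/2) * p.2^2))) := by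
          rw [hE, ← sq_abs p.1]; ring

theorem stmt17 (θ : ℝ) (hθ : θ ∈ Set.Ioo (-1 : ℝ) 1) :
    (∫ z₁ : ℝ, ∫ z₂ : ℝ, |z₁| * |z₂| * bvnDensity θ z₁ z₂) =
      (2 / Real.pi) * (θ * Real.arcsin θ + Real.sqrt (1 - θ ^ 2)) := by
  obtain ⟨h1, h2⟩ := hθ
  set s := Real.sqrt (1 - θ ^ 2) with hs
  have step1 : (∫ z₁ : ℝ, ∫ z₂ : ℝ, |z₁| * |z₂| * bvnDensity θ z₁ z₂)
      = ∫ z₁ : ℝ, ∫ u : ℝ, |z₁| * |θ * z₁ + s * u|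
          * ((1/(2*π)) * Real.exp (-(1/2) * (z₁^2 + u^2))) :=
    integral_congr_ae (Filter.Eventually.of_forall fun z₁ => inner_eq h1 h2 z₁)
  rw [step1]
  have hG := G_integrable h1 h2
  rw [MeasureTheory.Measure.volume_eq_prod] at hG
  have step2 := MeasureTheory.integral_integral (μ := volume) (ν := volume)
    (f := fun x y : ℝ => |x| * |θ * x + s * y|
      * ((1/(2*π)) * Real.exp (-(1/2) * (x^2 + y^2)))) hG
  rw [step2, ← MeasureTheory.Measure.volume_eq_prod ℝ ℝ]
  have step3 := integral_comp_polarCoord_symm (fun p : ℝ × ℝ => |p.1| * |θ * p.1 + s * p.2|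
      * ((1/(2*π)) * Real.exp (-(1/2) * (p.1^2 + p.2^2))))
  rw [← step3]
  have htgt : polarCoord.target = Set.Ioi (0:ℝ) ×ˢ Set.Ioo (-π) π := rfl
  rw [htgt]
  have step4 : (∫ p in Set.Ioi (0:ℝ) ×ˢ Set.Ioo (-π) π,
        p.1 • ((fun p : ℝ × ℝ => |p.1| * |θ * p.1 + s * p.2|
          * ((1/(2*π)) * Real.exp (-(1/2) * (p.1^2 + p.2^2)))) (polarCoord.symm p)))
      = ∫ p in Set.Ioi (0:ℝ) ×ˢ Set.Ioo (-π) π,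
          (p.1 ^ 3 * Real.exp (-(1/2) * p.1^2))
            * ((1/(2*π)) * |Real.cos p.2 * (θ * Real.cos p.2 + s * Real.sin p.2)|) := by
    apply MeasureTheory.setIntegral_congr_fun (measurableSet_Ioi.prod measurableSet_Ioo)
    intro p hp
    have hr0 : 0 < p.1 := hp.1
    simp only [polarCoord_symm_apply, smul_eq_mul]
    have hsq : (p.1 * Real.cos p.2)^2 + (p.1 * Real.sin p.2)^2 = p.1^2 := by
      have h := Real.sin_sq_add_cos_sq p.2
      linear_combination p.1^2 * h
    rw [hsq]
    rw [abs_mul, abs_of_pos hr0]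
    rw [show θ * (p.1 * Real.cos p.2) + s * (p.1 * Real.sin p.2)
        = p.1 * (θ * Real.cos p.2 + s * Real.sin p.2) by ring]
    rw [abs_mul, abs_of_pos hr0, abs_mul]
    ring
  rw [step4]
  rw [MeasureTheory.Measure.volume_eq_prod ℝ ℝ]
  rw [MeasureTheory.setIntegral_prod_mul (fun r : ℝ => r ^ 3 * Real.exp (-(1/2) * r^2))
    (fun φ : ℝ => (1/(2*π)) * |Real.cos φ * (θ * Real.cos φ + s * Real.sin φ)|)
    (Set.Ioi (0:ℝ)) (Set.Ioo (-π) π)]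
  rw [radial_int]
  have hang : (∫ φ in Set.Ioo (-π) π,
      (1/(2*π)) * |Real.cos φ * (θ * Real.cos φ + s * Real.sin φ)|)
      = (1/(2*π)) * (2 * (θ * Real.arcsin θ + s)) := by
    rw [MeasureTheory.integral_const_mul, angular_int h1 h2]
  rw [hang]
  have hπ : Real.pi ≠ 0 := Real.pi_ne_zero
  field_simp
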